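/- arXiv:2211.13208 — 4 statements merged into one kernel-verified Lean document; each statement's English description precedes it below -/
import Mathlib

section
/- Let {X_k}_{k=1}^n be a real-valued martingale difference sequence adapted to filtration {F_k} with |X_k| ≤ M almost surely, and let V = ∑_{k=1}^n E[X_k² | F_{k−1}]. Then for any t > 0, P( ∑_{k=1}^n X_k ≥ 2Mt/3 + √(2bt) and V ≤ b ) ≤ e^{−t}. -/
/-!
Chernoff's method applied to an exponential supermartingale. Write
`exp x = 1 + x + x² G(x)` with `G(x) = ∑ xⁿ / (n + 2)!`. Since `G` is increasing in `|x|` and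
`|X_k| ≤ M`, we get `E[exp(λ X_k) | ℱ_{k-1}] ≤ 1 + ψ E[X_k² | ℱ_{k-1}] ≤ exp(ψ E[X_k² | ℱ_{k-1}])`
with `ψ = λ² G(λ M)`, so `exp(λ S_k - ψ V_k)` is a supermartingale starting at `1`. On the event
`S_n ≥ a := 2Mt/3 + √(2bt)`, `V_n ≤ b` its exponent is at least `λ a - ψ b`, and Bernstein's
estimate `G(u) ≤ 1 / (2 (1 - u/3))` shows that `λ = a / (b + M a / 3)` makes this at least `t`.
-/

open MeasureTheory ProbabilityTheory Real Finset
open scoped Nat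

noncomputable def expTail (x : ℝ) : ℝ := ∑' n : ℕ, x ^ n / ((n + 2)! : ℝ)

lemma summable_expTail (x : ℝ) : Summable fun n : ℕ => x ^ n / ((n + 2)! : ℝ) := by
  refine .of_norm_bounded (Real.summable_pow_div_factorial |x|) fun n => ?_
  rw [norm_div, norm_pow, Real.norm_eq_abs, Real.norm_natCast]
  gcongr
  omega

lemma exp_eq_one_add_add_sq_mul_expTail (x : ℝ) : exp x = 1 + x + x ^ 2 * expTail x := by
  have hsplit := (Real.summable_pow_div_factorial x).sum_add_tsum_nat_add 2
  rw [Real.exp_eq_exp_ℝ, NormedSpace.exp_eq_tsum_div]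
  beta_reduce
  rw [← hsplit, expTail, ← tsum_mul_left]
  simp only [sum_range_succ, sum_range_zero, pow_zero, pow_one, Nat.factorial_zero,
    Nat.factorial_one, Nat.cast_one, pow_add]
  congr 1
  · ring
  · congr 1 with n
    ring

lemma expTail_nonneg (x : ℝ) : 0 ≤ expTail x := by
  rcases eq_or_ne x 0 with rfl | hx
  · exact tsum_nonneg fun n => by positivity
  · refine nonneg_of_mul_nonneg_right (a := x ^ 2) ?_ (by positivity)
    linarith [exp_eq_one_add_add_sq_mul_expTail x, add_one_le_exp x]

lemma expTail_le_of_abs_le {x y : ℝ} (h : |x| ≤ y) : expTail x ≤ expTail y := by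
  refine (summable_expTail x).tsum_le_tsum (fun n => ?_) (summable_expTail y)
  have hpow : x ^ n ≤ y ^ n :=
    (le_abs_self _).trans ((abs_pow x n).trans_le (pow_le_pow_left₀ (abs_nonneg x) h n))
  exact div_le_div_of_nonneg_right hpow (by positivity)

/-- Bernstein's bound, from `(n + 2)! ≥ 2 * 3 ^ n`. -/
lemma expTail_le {u : ℝ} (hu : 0 ≤ u) (hu3 : u < 3) : expTail u ≤ 1 / (2 * (1 - u / 3)) := by
  have hr : u / 3 < 1 := by linarith
  calc expTail u ≤ ∑' n : ℕ, 1 / 2 * (u / 3) ^ n := by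
        refine (summable_expTail u).tsum_le_tsum (fun n => ?_)
          ((summable_geometric_of_lt_one (by positivity) hr).mul_left _)
        have hfact : (3 ^ n * 2 : ℝ) ≤ (n + 2)! := by
          have := Nat.factorial_mul_pow_le_factorial (m := 2) (n := n)
          rw [add_comm 2 n, mul_comm] at this
          exact_mod_cast this
        rw [div_pow, one_div_mul_eq_div, div_div]
        exact div_le_div_of_nonneg_left (by positivity) (by positivity) hfact
    _ = 1 / (2 * (1 - u / 3)) := by
        rw [tsum_mul_left, tsum_geometric_of_lt_one (by positivity) hr]
        field_simp

lemma exp_mul_le_of_abs_le {l M x : ℝ} (hl : 0 ≤ l) (hx : |x| ≤ M) :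
    exp (l * x) ≤ 1 + l * x + l ^ 2 * expTail (l * M) * x ^ 2 := by
  have hlx : |l * x| ≤ l * M := by
    rw [abs_mul, abs_of_nonneg hl]
    exact mul_le_mul_of_nonneg_left hx hl
  calc exp (l * x) = 1 + l * x + (l * x) ^ 2 * expTail (l * x) :=
        exp_eq_one_add_add_sq_mul_expTail _
    _ ≤ 1 + l * x + (l * x) ^ 2 * expTail (l * M) := by
        gcongr
        exact expTail_le_of_abs_le hlx
    _ = 1 + l * x + l ^ 2 * expTail (l * M) * x ^ 2 := by ring

lemma exists_freedman_exponent {M b t : ℝ} (hM : 0 ≤ M) (hb : 0 < b) (ht : 0 < t) :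
    ∃ l, 0 < l ∧ t ≤ l * (2 * M * t / 3 + √(2 * b * t)) - l ^ 2 * expTail (l * M) * b := by
  set s := √(2 * b * t)
  have hs2 : s ^ 2 = 2 * b * t := Real.sq_sqrt (by positivity)
  have hs : 0 < s := Real.sqrt_pos.mpr (by positivity)
  set a := 2 * M * t / 3 + s with ha_def
  set d := b + M * a / 3 with hd_def
  have ha : 0 < a := by positivity
  have hd : 0 < d := by positivity
  have hbd : 1 - a / d * M / 3 = b / d := by field_simp; ring
  have hG : expTail (a / d * M) ≤ d / (2 * b) := by
    have hlM : a / d * M < 3 := by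
      rw [div_mul_eq_mul_div, div_lt_iff₀ hd]
      linarith
    calc expTail (a / d * M) ≤ 1 / (2 * (1 - a / d * M / 3)) := expTail_le (by positivity) hlM
      _ = d / (2 * b) := by rw [hbd]; field_simp
  have hkey : 2 * t * d ≤ a ^ 2 := by
    have : a ^ 2 - 2 * t * d = 2 * M * t / 3 * s := by rw [hd_def, ha_def]; linear_combination hs2
    linarith [mul_nonneg (by positivity : 0 ≤ 2 * M * t / 3) hs.le]
  refine ⟨a / d, by positivity, ?_⟩
  calc t ≤ a ^ 2 / (2 * d) := by rw [le_div_iff₀ (by positivity)]; linarith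
    _ = a / d * a - (a / d) ^ 2 * (d / (2 * b)) * b := by field_simp; ring
    _ ≤ a / d * a - (a / d) ^ 2 * expTail (a / d * M) * b := by gcongr

section CondExp

variable {Ω : Type*} {m m₀ : MeasurableSpace Ω} {μ : Measure Ω} [IsFiniteMeasure μ]

lemma condExp_exp_mul_le {Y : Ω → ℝ} {M l : ℝ} (hm : m ≤ m₀) (hl : 0 ≤ l)
    (hY : AEStronglyMeasurable Y μ) (hbdd : ∀ᵐ ω ∂μ, |Y ω| ≤ M) (hmean : μ[Y | m] =ᵐ[μ] 0) :
    μ[fun ω => exp (l * Y ω) | m]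
      ≤ᵐ[μ] fun ω => exp (l ^ 2 * expTail (l * M) * μ[fun ω => Y ω ^ 2 | m] ω) := by
  set c := l ^ 2 * expTail (l * M)
  have hY_int : Integrable Y μ :=
    .of_bound hY M (hbdd.mono fun ω h => by rwa [Real.norm_eq_abs])
  have hY2_int : Integrable (fun ω => Y ω ^ 2) μ :=
    .of_bound (hY.pow 2) (M ^ 2) (hbdd.mono fun ω h => by
      rw [Real.norm_eq_abs, abs_pow]
      exact pow_le_pow_left₀ (abs_nonneg _) h 2)
  have hexp_int : Integrable (fun ω => exp (l * Y ω)) μ :=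
    integrable_exp_mul_of_le l M hl hY.aemeasurable (hbdd.mono fun ω h => (abs_le.mp h).2)
  have hquad : μ[(fun _ => 1) + l • Y + c • fun ω => Y ω ^ 2 | m]
      =ᵐ[μ] fun ω => 1 + c * μ[fun ω => Y ω ^ 2 | m] ω := by
    filter_upwards [condExp_add ((integrable_const 1).add (hY_int.smul l)) (hY2_int.smul c) m,
      condExp_add (integrable_const (1 : ℝ)) (hY_int.smul l) m, condExp_smul l Y m,
      condExp_smul c (fun ω => Y ω ^ 2) m, hmean] with ω h₁ h₂ h₃ h₄ h₅
    simp [h₁, h₂, h₃, h₄, h₅, condExp_const hm]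
  filter_upwards [condExp_mono (m := m) hexp_int
    (((integrable_const 1).add (hY_int.smul l)).add (hY2_int.smul c))
    (hbdd.mono fun ω h => exp_mul_le_of_abs_le hl h), hquad] with ω hle heq
  rw [heq] at hle
  linarith [add_one_le_exp (c * μ[fun ω => Y ω ^ 2 | m] ω)]

end CondExp

section FreedmanExponent

variable {Ω : Type*} {m : MeasurableSpace Ω} {μ : Measure Ω}

/-- `l S_k - c V_k` for the partial sums `S_k = ∑_{j=1}^k X_j` and the predictable quadratic
variation `V_k = ∑_{j=1}^k E[X_j² | ℱ_{j-1}]`. -/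
noncomputable def freedmanExponent (μ : Measure Ω) (ℱ : Filtration ℕ m) (X : ℕ → Ω → ℝ)
    (l c : ℝ) (k : ℕ) (ω : Ω) : ℝ :=
  l * ∑ j ∈ Icc 1 k, X j ω - c * ∑ j ∈ Icc 1 k, μ[fun ω' => X j ω' ^ 2 | ℱ (j - 1)] ω

variable {ℱ : Filtration ℕ m} {X : ℕ → Ω → ℝ} {l c : ℝ}

lemma freedmanExponent_zero : freedmanExponent μ ℱ X l c 0 = 0 := by
  ext ω
  simp [freedmanExponent]

lemma freedmanExponent_succ (k : ℕ) (ω : Ω) :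
    freedmanExponent μ ℱ X l c (k + 1) ω = freedmanExponent μ ℱ X l c k ω + l * X (k + 1) ω
      - c * μ[fun ω' => X (k + 1) ω' ^ 2 | ℱ k] ω := by
  simp only [freedmanExponent, sum_Icc_succ_top (Nat.le_add_left 1 k), Nat.add_sub_cancel]
  ring

lemma stronglyAdapted_freedmanExponent (hX : StronglyAdapted ℱ X) :
    StronglyAdapted ℱ (freedmanExponent μ ℱ X l c) := by
  intro k
  refine .sub (.const_mul (Finset.stronglyMeasurable_fun_sum _ fun j hj => ?_) l)
    (.const_mul (Finset.stronglyMeasurable_fun_sum _ fun j hj => ?_) c)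
  · exact (hX j).mono (ℱ.mono (mem_Icc.mp hj).2)
  · exact stronglyMeasurable_condExp.mono (ℱ.mono (by have := (mem_Icc.mp hj).2; omega))

lemma freedmanExponent_le [IsFiniteMeasure μ] {M : ℝ} (hl : 0 ≤ l) (hc : 0 ≤ c)
    (hbdd : ∀ k, ∀ᵐ ω ∂μ, |X k ω| ≤ M) (k : ℕ) :
    ∀ᵐ ω ∂μ, freedmanExponent μ ℱ X l c k ω ≤ l * (k * M) := by
  have hV : ∀ᵐ ω ∂μ, ∀ j, 0 ≤ μ[fun ω' => X j ω' ^ 2 | ℱ (j - 1)] ω :=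
    ae_all_iff.mpr fun j => condExp_nonneg (ae_of_all μ fun ω => sq_nonneg _)
  filter_upwards [hV, ae_all_iff.mpr hbdd] with ω hVω hXω
  have hS : ∑ j ∈ Icc 1 k, X j ω ≤ k * M := by
    simpa using sum_le_sum fun j (_ : j ∈ Icc 1 k) => (abs_le.mp (hXω j)).2
  have := mul_nonneg hc (sum_nonneg fun j (_ : j ∈ Icc 1 k) => hVω j)
  unfold freedmanExponent
  linarith [mul_le_mul_of_nonneg_left hS hl]

lemma le_freedmanExponent {a b : ℝ} {k : ℕ} {ω : Ω} (hl : 0 ≤ l) (hc : 0 ≤ c)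
    (hS : a ≤ ∑ j ∈ Icc 1 k, X j ω)
    (hV : ∑ j ∈ Icc 1 k, μ[fun ω' => X j ω' ^ 2 | ℱ (j - 1)] ω ≤ b) :
    l * a - c * b ≤ freedmanExponent μ ℱ X l c k ω :=
  sub_le_sub (mul_le_mul_of_nonneg_left hS hl) (mul_le_mul_of_nonneg_left hV hc)

end FreedmanExponent

lemma measure_ge_le_exp_neg_of_integral_exp_le_one {Ω : Type*} {m : MeasurableSpace Ω}
    {μ : Measure Ω} [IsFiniteMeasure μ] {Y : Ω → ℝ} (hY : Integrable (fun ω => exp (Y ω)) μ)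
    (h : ∫ ω, exp (Y ω) ∂μ ≤ 1) (t : ℝ) :
    μ {ω | t ≤ Y ω} ≤ ENNReal.ofReal (exp (-t)) := by
  rw [← ofReal_measureReal]
  gcongr
  calc μ.real {ω | t ≤ Y ω} ≤ exp (-1 * t) * mgf Y μ 1 :=
        measure_ge_le_exp_mul_mgf t zero_le_one (by simpa using hY)
    _ ≤ exp (-t) := by
        rw [neg_one_mul]
        exact mul_le_of_le_one_right (exp_pos _).le (by simpa [mgf] using h)

section Supermartingale

variable {Ω : Type*} {m : MeasurableSpace Ω} {μ : Measure Ω} [IsFiniteMeasure μ]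
  {ℱ : Filtration ℕ m} {X : ℕ → Ω → ℝ} {M l : ℝ}

theorem supermartingale_exp_freedmanExponent (hl : 0 ≤ l) (hX : StronglyAdapted ℱ X)
    (hmds : ∀ k, μ[X k | ℱ (k - 1)] =ᵐ[μ] 0) (hbdd : ∀ k, ∀ᵐ ω ∂μ, |X k ω| ≤ M) :
    Supermartingale
      (fun k ω => exp (freedmanExponent μ ℱ X l (l ^ 2 * expTail (l * M)) k ω)) ℱ μ := by
  set c := l ^ 2 * expTail (l * M)
  have hc : 0 ≤ c := mul_nonneg (sq_nonneg l) (expTail_nonneg _)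
  set Y := freedmanExponent μ ℱ X l c
  have hY : StronglyAdapted ℱ Y := stronglyAdapted_freedmanExponent hX
  have hexp_int (k : ℕ) : Integrable (fun ω => exp (Y k ω)) μ := by
    simpa using integrable_exp_mul_of_le 1 _ zero_le_one
      ((hY k).mono (ℱ.le k)).measurable.aemeasurable (freedmanExponent_le hl hc hbdd k)
  refine supermartingale_nat (fun k => continuous_exp.comp_stronglyMeasurable (hY k)) hexp_int
    fun k => ?_
  set W := μ[fun ω' => X (k + 1) ω' ^ 2 | ℱ k]
  set f := fun ω => exp (Y k ω - c * W ω)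
  set g := fun ω => exp (l * X (k + 1) ω)
  have hfg : (fun ω => exp (Y (k + 1) ω)) = f * g := by
    ext ω
    simp only [Pi.mul_apply, f, g, ← exp_add, Y, freedmanExponent_succ]
    congr 1
    ring
  have hf : StronglyMeasurable[ℱ k] f :=
    continuous_exp.comp_stronglyMeasurable ((hY k).sub (stronglyMeasurable_condExp.const_mul c))
  have hX_meas : AEStronglyMeasurable (X (k + 1)) μ :=
    ((hX (k + 1)).mono (ℱ.le _)).aestronglyMeasurable
  have hg : Integrable g μ := integrable_exp_mul_of_le l M hl hX_meas.aemeasurable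
    ((hbdd (k + 1)).mono fun ω h => (abs_le.mp h).2)
  filter_upwards [condExp_mul_of_stronglyMeasurable_left hf (hfg ▸ hexp_int (k + 1)) hg,
    condExp_exp_mul_le (ℱ.le k) hl hX_meas (hbdd (k + 1)) (hmds (k + 1))] with ω hpull hle
  rw [hfg, hpull, Pi.mul_apply]
  calc f ω * μ[g | ℱ k] ω ≤ f ω * exp (c * W ω) := by gcongr
    _ = exp (Y k ω) := by rw [← exp_add]; ring_nf

end Supermartingale

theorem stmt2 {Ω : Type*} {m : MeasurableSpace Ω} {μ : Measure Ω}
    [IsProbabilityMeasure μ]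
    (ℱ : Filtration ℕ m) (X : ℕ → Ω → ℝ) (n : ℕ) (M b t : ℝ)
    (hM : 0 ≤ M) (hb : 0 < b) (ht : 0 < t)
    (hadapted : StronglyAdapted ℱ X)
    (hmds : ∀ k, μ[X k | ℱ (k - 1)] =ᵐ[μ] 0)
    (hbdd : ∀ k, ∀ᵐ ω ∂μ, |X k ω| ≤ M) :
    μ {ω | 2 * M * t / 3 + Real.sqrt (2 * b * t) ≤ ∑ k ∈ Finset.Icc 1 n, X k ω ∧
        ∑ k ∈ Finset.Icc 1 n, (μ[fun ω' => (X k ω') ^ 2 | ℱ (k - 1)]) ω ≤ b} ≤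
      ENNReal.ofReal (Real.exp (-t)) := by
  obtain ⟨l, hl, hlt⟩ := exists_freedman_exponent hM hb ht
  set c := l ^ 2 * expTail (l * M)
  have hZ := supermartingale_exp_freedmanExponent hl.le hadapted hmds hbdd
  have hZ_int : ∫ ω, exp (freedmanExponent μ ℱ X l c n ω) ∂μ ≤ 1 := by
    simpa [freedmanExponent_zero] using hZ.setIntegral_le (Nat.zero_le n) MeasurableSet.univ
  have hc : 0 ≤ c := mul_nonneg (sq_nonneg l) (expTail_nonneg _)
  calc _ ≤ μ {ω | t ≤ freedmanExponent μ ℱ X l c n ω} :=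
        measure_mono fun ω hω => hlt.trans (le_freedmanExponent hl.le hc hω.1 hω.2)
    _ ≤ _ := measure_ge_le_exp_neg_of_integral_exp_le_one (hZ.integrable n) hZ_int t
end

section
/- Let Σ = λI + ∑_{t=1}^k φ_t φ_tᵀ with λ > 0 and ‖φ_t‖₂ ≤ 1, and let ŵ = Σ^{−1} ∑_{t=1}^k φ_t y_t where |y_t| ≤ B for all t. Then ‖ŵ‖₂ ≤ B·√(dk/λ). -/
/-!
Write `G = λI + ∑ φ_t φ_tᵀ`. Since `G ⪰ λI`, each `u_t = G⁻¹ φ_t` satisfies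
`λ ‖u_t‖² ≤ u_tᵀ G u_t = φ_tᵀ G⁻¹ φ_t`, and taking the trace of `G⁻¹ G = I` gives
`∑_t φ_tᵀ G⁻¹ φ_t = d - λ tr G⁻¹ ≤ d`. Then `ŵ = ∑_t y_t u_t`, so by the triangle inequality
and Cauchy–Schwarz `‖ŵ‖ ≤ B ∑_t √(φ_tᵀ G⁻¹ φ_t / λ) ≤ B √(k d / λ)`.
-/

open Matrix Finset

lemma Real.sum_sqrt_le_sqrt_card_mul_sum {ι : Type*} (s : Finset ι) {f : ι → ℝ}
    (hf : ∀ i, 0 ≤ f i) : ∑ i ∈ s, √(f i) ≤ √(#s * ∑ i ∈ s, f i) := by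
  simpa [mul_comm] using Real.sum_sqrt_mul_sqrt_le s hf (g := fun _ => 1) fun _ => zero_le_one

lemma EuclideanSpace.norm_toLp_eq_sqrt_dotProduct {n : Type*} [Fintype n] (x : n → ℝ) :
    ‖WithLp.toLp 2 x‖ = √(x ⬝ᵥ x) := by
  rw [norm_eq_sqrt_real_inner, EuclideanSpace.inner_toLp_toLp, star_trivial]

section RidgeRegression

variable {ι n : Type*} [Fintype n] [DecidableEq n]

def regularizedGram (lam : ℝ) (s : Finset ι) (φ : ι → n → ℝ) : Matrix n n ℝ :=
  lam • 1 + ∑ t ∈ s, vecMulVec (φ t) (φ t)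

variable {lam : ℝ} {s : Finset ι} {φ : ι → n → ℝ}

lemma dotProduct_regularizedGram_mulVec (u : n → ℝ) :
    u ⬝ᵥ (regularizedGram lam s φ *ᵥ u) = lam * (u ⬝ᵥ u) + ∑ t ∈ s, (φ t ⬝ᵥ u) ^ 2 := by
  simp only [regularizedGram, add_mulVec, smul_mulVec, one_mulVec, sum_mulVec, vecMulVec_mulVec,
    dotProduct_add, dotProduct_smul, dotProduct_sum, smul_eq_mul, op_smul_eq_smul]
  congr 1
  refine sum_congr rfl fun t _ => ?_
  rw [dotProduct_comm, sq]

lemma regularizedGram_posDef (hlam : 0 < lam) : (regularizedGram lam s φ).PosDef :=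
  (PosDef.one.smul hlam).add_posSemidef <| posSemidef_sum s fun t _ => by
    simpa using posSemidef_vecMulVec_self_star (φ t)

lemma sum_dotProduct_inv_regularizedGram_mulVec_le (hlam : 0 < lam) :
    ∑ t ∈ s, φ t ⬝ᵥ ((regularizedGram lam s φ)⁻¹ *ᵥ φ t) ≤ Fintype.card n := by
  set G := regularizedGram lam s φ
  have hG := regularizedGram_posDef (s := s) (φ := φ) hlam
  have htrace : (G⁻¹ * G).trace
      = lam * G⁻¹.trace + ∑ t ∈ s, φ t ⬝ᵥ (G⁻¹ *ᵥ φ t) := by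
    simp only [G, regularizedGram, mul_add, mul_smul_comm, mul_one, trace_add, trace_smul,
      mul_sum, trace_sum, mul_vecMulVec, trace_vecMulVec, smul_eq_mul, dotProduct_comm]
  rw [nonsing_inv_mul G ((isUnit_iff_isUnit_det G).mp hG.isUnit), trace_one] at htrace
  nlinarith [mul_nonneg hlam.le hG.inv.posSemidef.trace_nonneg]

lemma mul_dotProduct_self_inv_regularizedGram_mulVec_le (hlam : 0 < lam) (v : n → ℝ) :
    lam * ((regularizedGram lam s φ)⁻¹ *ᵥ v ⬝ᵥ (regularizedGram lam s φ)⁻¹ *ᵥ v)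
      ≤ v ⬝ᵥ ((regularizedGram lam s φ)⁻¹ *ᵥ v) := by
  set G := regularizedGram lam s φ
  set u := G⁻¹ *ᵥ v
  have hGu : G *ᵥ u = v := by
    rw [mulVec_mulVec, mul_nonsing_inv G ((isUnit_iff_isUnit_det G).mp
      (regularizedGram_posDef hlam).isUnit), one_mulVec]
  rw [← hGu, dotProduct_comm (G *ᵥ u), dotProduct_regularizedGram_mulVec]
  exact le_add_of_nonneg_right (sum_nonneg fun t _ => sq_nonneg _)

theorem norm_inv_regularizedGram_mulVec_sum_smul_le (hlam : 0 < lam) {B : ℝ} (hB : 0 ≤ B)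
    {y : ι → ℝ} (hy : ∀ t ∈ s, |y t| ≤ B) :
    ‖WithLp.toLp 2 ((regularizedGram lam s φ)⁻¹ *ᵥ ∑ t ∈ s, y t • φ t)‖
      ≤ B * √(Fintype.card n * #s / lam) := by
  set G := regularizedGram lam s φ
  set a : ι → ℝ := fun t => φ t ⬝ᵥ (G⁻¹ *ᵥ φ t)
  have hGa : ∀ t, lam * (G⁻¹ *ᵥ φ t ⬝ᵥ G⁻¹ *ᵥ φ t) ≤ a t := fun t =>
    mul_dotProduct_self_inv_regularizedGram_mulVec_le hlam (φ t)
  have ha : ∀ t, 0 ≤ a t / lam := fun t =>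
    div_nonneg ((mul_nonneg hlam.le (dotProduct_self_star_nonneg _)).trans (hGa t)) hlam.le
  have hnorm : ∀ t, ‖WithLp.toLp 2 (G⁻¹ *ᵥ φ t)‖ ≤ √(a t / lam) := fun t => by
    rw [EuclideanSpace.norm_toLp_eq_sqrt_dotProduct]
    exact Real.sqrt_le_sqrt ((le_div_iff₀' hlam).2 (hGa t))
  calc ‖WithLp.toLp 2 (G⁻¹ *ᵥ ∑ t ∈ s, y t • φ t)‖
      = ‖∑ t ∈ s, y t • WithLp.toLp 2 (G⁻¹ *ᵥ φ t)‖ := by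
        simp only [mulVec_sum, mulVec_smul, WithLp.toLp_sum, WithLp.toLp_smul]
    _ ≤ ∑ t ∈ s, |y t| * ‖WithLp.toLp 2 (G⁻¹ *ᵥ φ t)‖ :=
        (norm_sum_le _ _).trans_eq (sum_congr rfl fun t _ => by rw [norm_smul, Real.norm_eq_abs])
    _ ≤ B * ∑ t ∈ s, √(a t / lam) := by
        rw [mul_sum]
        exact sum_le_sum fun t ht => mul_le_mul (hy t ht) (hnorm t) (norm_nonneg _) hB
    _ ≤ B * √(#s * ∑ t ∈ s, a t / lam) :=
        mul_le_mul_of_nonneg_left (Real.sum_sqrt_le_sqrt_card_mul_sum s ha) hB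
    _ ≤ B * √(Fintype.card n * #s / lam) := by
        rw [← sum_div, mul_comm (Fintype.card n : ℝ), mul_div_assoc]
        gcongr
        exact sum_dotProduct_inv_regularizedGram_mulVec_le hlam

end RidgeRegression

theorem stmt5_general (d k : ℕ) (φ : ℕ → Fin d → ℝ) (y : ℕ → ℝ) (lam B : ℝ)
    (hlam : 0 < lam) (hB : 0 ≤ B)
    (hy : ∀ t, |y t| ≤ B)
    (S : Matrix (Fin d) (Fin d) ℝ)
    (hS : S = lam • 1 + ∑ t ∈ Finset.range k, vecMulVec (φ t) (φ t))
    (w : Fin d → ℝ) (hw : w = S⁻¹ *ᵥ ∑ t ∈ Finset.range k, y t • φ t) :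
    Real.sqrt (w ⬝ᵥ w) ≤ B * Real.sqrt (d * k / lam) := by
  subst hS hw
  rw [← EuclideanSpace.norm_toLp_eq_sqrt_dotProduct]
  simpa [regularizedGram] using
    norm_inv_regularizedGram_mulVec_sum_smul_le (s := Finset.range k) (φ := φ) hlam hB
      fun t _ => hy t

theorem stmt5 (d k : ℕ) (φ : ℕ → Fin d → ℝ) (y : ℕ → ℝ) (lam B : ℝ)
    (hlam : 0 < lam) (hB : 0 ≤ B)
    (hφ : ∀ t, Real.sqrt (φ t ⬝ᵥ φ t) ≤ 1)
    (hy : ∀ t, |y t| ≤ B)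
    (S : Matrix (Fin d) (Fin d) ℝ)
    (hS : S = lam • 1 + ∑ t ∈ Finset.range k, vecMulVec (φ t) (φ t))
    (w : Fin d → ℝ) (hw : w = S⁻¹ *ᵥ ∑ t ∈ Finset.range k, y t • φ t) :
    Real.sqrt (w ⬝ᵥ w) ≤ B * Real.sqrt (d * k / lam) :=
  stmt5_general d k φ y lam B hlam hB hy S hS w hw
end

section
/- Consider a finite-horizon MDP with horizon H, optimal value functions V*_h and Q*_h, and gap Δ_h(s,a) = V*_h(s) − Q*_h(s,a). For any policy π and any initial state s₁: V*_1(s₁) − V^π_1(s₁) = E_π[ ∑_{h=1}^H Δ_h(s_h, a_h) | s₁ ], where the expectation is over the trajectory (s₁,a₁,…,s_H,a_H) generated by π. -/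
/-!
Weight the value gap `V*_h - V^π_h` by the state distribution of `π` at step `h`. One Bellman
step splits this weighted gap into the expected action gap `V*_h - Q*_h` at step `h` plus the
weighted value gap at step `h + 1`, so the action gaps telescope to the value gap at step `0`,
the value gaps at the terminal step `H` being zero.
-/

/-- Marginal state-visitation distribution of a (stochastic, time-inhomogeneous)
policy `π` in an MDP with transition kernel `P`, started from initial
distribution `d1`.  `occ P π d1 h s` is the probability of being in state `s`
at step `h` (0-indexed). -/
noncomputable def occ {S A : Type*} [Fintype S] [Fintype A]
    (P : ℕ → S → A → S → ℝ) (π : ℕ → S → A → ℝ) (d1 : S → ℝ) : ℕ → S → ℝ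
  | 0 => d1
  | n + 1 => fun s' => ∑ s, ∑ a, occ P π d1 n s * π n s a * P n s a s'

open Finset

section

variable {S A : Type*} [Fintype S] [Fintype A]

theorem sum_occ_succ_mul (P : ℕ → S → A → S → ℝ) (π : ℕ → S → A → ℝ) (d1 : S → ℝ) (n : ℕ)
    (v : S → ℝ) :
    ∑ s', occ P π d1 (n + 1) s' * v s' =
      ∑ s, ∑ a, occ P π d1 n s * π n s a * ∑ s', P n s a s' * v s' := by
  simp only [occ, sum_mul, mul_sum, mul_assoc]
  rw [sum_comm]
  refine sum_congr rfl fun s _ => ?_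
  rw [sum_comm]

theorem value_sub_eq_sum_gap_add (p : A → ℝ) (hp : ∑ a, p a = 1) (T : A → S → ℝ) (r : A → ℝ)
    (vstar vpi : ℝ) (Vstar Vpi : S → ℝ) (Qstar Qpi : A → ℝ)
    (hQpi : ∀ a, Qpi a = r a + ∑ s', T a s' * Vpi s') (hvpi : vpi = ∑ a, p a * Qpi a)
    (hQstar : ∀ a, Qstar a = r a + ∑ s', T a s' * Vstar s') :
    vstar - vpi =
      ∑ a, p a * (vstar - Qstar a) + ∑ a, p a * ∑ s', T a s' * (Vstar s' - Vpi s') := by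
  have hvstar : vstar = ∑ a, p a * vstar := by rw [← sum_mul, hp, one_mul]
  simp only [hQpi, hQstar, mul_sub, sum_sub_distrib] at hvpi ⊢
  rw [hvpi]
  nth_rewrite 1 [hvstar]
  simp only [mul_add, sum_add_distrib]
  ring

end

theorem stmt10_general {S A : Type*} [Fintype S] [Fintype A] [DecidableEq S]
    (H : ℕ) (P : ℕ → S → A → S → ℝ) (r : ℕ → S → A → ℝ) (π : ℕ → S → A → ℝ)
    (Vstar Vpi : ℕ → S → ℝ) (Qstar Qpi : ℕ → S → A → ℝ)
    (hπsum : ∀ h s, ∑ a, π h s a = 1)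
    (hQpi : ∀ h, h < H → ∀ s a, Qpi h s a = r h s a + ∑ s', P h s a s' * Vpi (h + 1) s')
    (hVpi : ∀ h, h < H → ∀ s, Vpi h s = ∑ a, π h s a * Qpi h s a)
    (hQstar : ∀ h, h < H → ∀ s a, Qstar h s a = r h s a + ∑ s', P h s a s' * Vstar (h + 1) s')
    (hVpiH : ∀ s, Vpi H s = 0) (hVstarH : ∀ s, Vstar H s = 0)
    (s₁ : S) :
    Vstar 0 s₁ - Vpi 0 s₁ =
      ∑ h ∈ Finset.range H, ∑ s, ∑ a,
        occ P π (fun s => if s = s₁ then 1 else 0) h s * π h s a *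
          (Vstar h s - Qstar h s a) := by
  set d := occ P π (fun s => if s = s₁ then 1 else 0)
  set gap : ℕ → ℝ := fun h => ∑ s, d h s * (Vstar h s - Vpi h s)
  have step : ∀ h ∈ range H,
      gap h - gap (h + 1) = ∑ s, ∑ a, d h s * π h s a * (Vstar h s - Qstar h s a) := by
    intro h hh
    rw [mem_range] at hh
    simp only [gap, sum_occ_succ_mul, d]
    simp only [value_sub_eq_sum_gap_add _ (hπsum h _) _ _ _ _ _ _ _ _ (hQpi h hh _)
      (hVpi h hh _) (hQstar h hh _), mul_add, sum_add_distrib, mul_sum, mul_assoc]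
    ring
  calc Vstar 0 s₁ - Vpi 0 s₁ = gap 0 - gap H := by simp [gap, d, occ, hVpiH, hVstarH]
    _ = _ := by rw [← sum_range_sub', sum_congr rfl step]

theorem stmt10 {S A : Type*} [Fintype S] [Fintype A] [DecidableEq S]
    (H : ℕ) (P : ℕ → S → A → S → ℝ) (r : ℕ → S → A → ℝ) (π : ℕ → S → A → ℝ)
    (Vstar Vpi : ℕ → S → ℝ) (Qstar Qpi : ℕ → S → A → ℝ)
    (hPpos : ∀ h s a s', 0 ≤ P h s a s')
    (hPsum : ∀ h s a, ∑ s', P h s a s' = 1)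
    (hπpos : ∀ h s a, 0 ≤ π h s a)
    (hπsum : ∀ h s, ∑ a, π h s a = 1)
    (hQpi : ∀ h, h < H → ∀ s a, Qpi h s a = r h s a + ∑ s', P h s a s' * Vpi (h + 1) s')
    (hVpi : ∀ h, h < H → ∀ s, Vpi h s = ∑ a, π h s a * Qpi h s a)
    (hQstar : ∀ h, h < H → ∀ s a, Qstar h s a = r h s a + ∑ s', P h s a s' * Vstar (h + 1) s')
    (hVpiH : ∀ s, Vpi H s = 0) (hVstarH : ∀ s, Vstar H s = 0)
    (s₁ : S) :
    Vstar 0 s₁ - Vpi 0 s₁ =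
      ∑ h ∈ Finset.range H, ∑ s, ∑ a,
        occ P π (fun s => if s = s₁ then 1 else 0) h s * π h s a *
          (Vstar h s - Qstar h s a) :=
  stmt10_general H P r π Vstar Vpi Qstar Qpi hπsum hQpi hVpi hQstar hVpiH hVstarH s₁
end

section
/- Let T be a monotone operator mapping bounded functions S×A → R (the Bellman operator T_h V = r_h + P_h V with r_h ∈ [0,1] and V ∈ [0, H−h]), and define Q̄(s,a) = T̂V(s,a) − b(s,a), Q̂(s,a) = max(min(Q̄(s,a), H−h+1), 0), where T̂ is any function with |TV(s,a) − T̂V(s,a)| ≤ b(s,a) pointwise and b ≥ 0. Then the Bellman error ζ(s,a) := TV(s,a) − Q̂(s,a) satisfies 0 ≤ ζ(s,a) ≤ 2·b(s,a) for all (s,a). -/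
/-! The pessimistic estimate `q = t̂ - b` lies in `[t - 2b, t]`. Clipping from above at `c ≥ t` never
cuts `q` below `t`, and clipping from below at `0 ≤ t` never lifts it above `t`, so the clipped value
stays in `[t - 2b, t]`. -/

section Clip

variable {α : Type*} [LinearOrder α] {q c z x : α}

theorem max_min_le_of_le (hq : q ≤ x) (hz : z ≤ x) : max (min q c) z ≤ x :=
  max_le (min_le_left q c |>.trans hq) hz

theorem le_max_min_of_le (hq : q ≤ c) : q ≤ max (min q c) z := by
  rw [min_eq_left hq]
  exact le_max_left q z

end Clip

theorem sub_max_min_sub_mem_Icc {α : Type*} [AddCommGroup α] [LinearOrder α]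
    [IsOrderedAddMonoid α] {t t' b c : α} (ht0 : 0 ≤ t) (htc : t ≤ c) (happrox : |t - t'| ≤ b) :
    t - max (min (t' - b) c) 0 ∈ Set.Icc 0 (2 • b) := by
  obtain ⟨hlow, hupp⟩ := abs_le.mp happrox
  have hq_le : t' - b ≤ t := sub_le_iff_le_add.mpr (neg_le_sub_iff_le_add.mp hlow)
  refine ⟨sub_nonneg.mpr (max_min_le_of_le hq_le ht0), ?_⟩
  calc t - max (min (t' - b) c) 0 ≤ t - (t' - b) := by
        gcongr; exact le_max_min_of_le (hq_le.trans htc)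
    _ = (t - t') + b := by abel
    _ ≤ 2 • b := by rw [two_nsmul]; gcongr

theorem stmt16_general {S A : Type*} (H h : ℝ) (t that b : S → A → ℝ)
    (ht0 : ∀ s a, 0 ≤ t s a) (ht1 : ∀ s a, t s a ≤ H - h + 1)
    (happrox : ∀ s a, |t s a - that s a| ≤ b s a) :
    ∀ s a, 0 ≤ t s a - max (min (that s a - b s a) (H - h + 1)) 0 ∧
      t s a - max (min (that s a - b s a) (H - h + 1)) 0 ≤ 2 * b s a := by
  intro s a
  simpa only [Set.mem_Icc, nsmul_eq_mul, Nat.cast_ofNat] using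
    sub_max_min_sub_mem_Icc (ht0 s a) (ht1 s a) (happrox s a)

theorem stmt16 {S A : Type*} (H h : ℝ) (t that b : S → A → ℝ)
    (ht0 : ∀ s a, 0 ≤ t s a) (ht1 : ∀ s a, t s a ≤ H - h + 1)
    (hb : ∀ s a, 0 ≤ b s a)
    (happrox : ∀ s a, |t s a - that s a| ≤ b s a) :
    ∀ s a, 0 ≤ t s a - max (min (that s a - b s a) (H - h + 1)) 0 ∧
      t s a - max (min (that s a - b s a) (H - h + 1)) 0 ≤ 2 * b s a :=
  stmt16_general H h t that b ht0 ht1 happrox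
end
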